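/- Let $W$ be an $n \times n$ matrix-valued weight function supported on an interval $(a,b) \subset \mathbb{R}$ (so $W(u)$ is positive semidefinite Hermitian for each $u$). If there exists a matrix $A$ in the commutant $\{A : A W(u) = W(u) A \text{ for all } u \in (a,b)\}$ that is not a scalar multiple of the identity, then there exists a Hermitian projection $P \ne 0, I$ such that $W(u) = P W(u) P + (I-P) W(u) (I-P)$ for all $u \in (a,b)$; consequently $W$ decomposes, after conjugation by a unitary matrix $R$, as a direct sum $R^* W(u) R = W_1(u) \oplus W_2(u)$ of weights of smaller sizes. -/
import Mathlib


open scoped ComplexOrder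

open Matrix in
theorem weight_key (n : ℕ) (a b : ℝ)
    (W : ℝ → Matrix (Fin n) (Fin n) ℂ)
    (B : Matrix (Fin n) (Fin n) ℂ) (hB : B.IsHermitian)
    (hBc : ∀ u ∈ Set.Ioo a b, B * W u = W u * B)
    (hBs : ∀ c : ℂ, B ≠ c • (1 : Matrix (Fin n) (Fin n) ℂ)) :
    (∃ P : Matrix (Fin n) (Fin n) ℂ, P.IsHermitian ∧ P * P = P ∧ P ≠ 0 ∧ P ≠ 1 ∧
      ∀ u ∈ Set.Ioo a b, W u = P * W u * P + (1 - P) * W u * (1 - P)) ∧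
    (∃ R : Matrix (Fin n) (Fin n) ℂ, ∃ m : ℕ, 0 < m ∧ m < n ∧
      R * R.conjTranspose = 1 ∧
      ∀ u ∈ Set.Ioo a b, ∀ i j : Fin n,
        (((i : ℕ) < m ∧ ¬ (j : ℕ) < m) ∨ (¬ (i : ℕ) < m ∧ (j : ℕ) < m)) →
          (R.conjTranspose * W u * R) i j = 0) := by
  classical
  set U : Matrix (Fin n) (Fin n) ℂ := (hB.eigenvectorUnitary : Matrix (Fin n) (Fin n) ℂ) with hUdef
  set lam : Fin n → ℝ := hB.eigenvalues with hlamdef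
  set D : Matrix (Fin n) (Fin n) ℂ := Matrix.diagonal (RCLike.ofReal ∘ lam) with hDdef
  have hspec : B = U * D * star U := hB.spectral_theorem
  have hU4 : star U * U = 1 := (Matrix.mem_unitaryGroup_iff'.mp hB.eigenvectorUnitary.2)
  have hU3 : U * star U = 1 := (Matrix.mem_unitaryGroup_iff.mp hB.eigenvectorUnitary.2)
  have hU1' : ∀ X : Matrix (Fin n) (Fin n) ℂ, star U * (U * X) = X := by
    intro X; rw [← mul_assoc, hU4, one_mul]
  have hU2' : ∀ X : Matrix (Fin n) (Fin n) ℂ, U * (star U * X) = X := by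
    intro X; rw [← mul_assoc, hU3, one_mul]
  -- eigenvalues are non-constant
  have hne : ∃ i j : Fin n, lam i ≠ lam j := by
    by_contra hcon
    push_neg at hcon
    rcases Nat.eq_zero_or_pos n with h0 | h0
    · apply hBs 0
      ext i j
      exact absurd i.2 (by omega)
    · apply hBs ((lam ⟨0, h0⟩ : ℝ) : ℂ)
      rw [hspec]
      have : D = ((lam ⟨0, h0⟩ : ℝ) : ℂ) • 1 := by
        ext i j
        by_cases hij : i = j
        · subst hij
          simp [hDdef, Matrix.diagonal, hcon i ⟨0, h0⟩]
        · simp [hDdef, Matrix.diagonal, Matrix.one_apply_ne hij, hij]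
      rw [this]
      rw [Matrix.mul_smul, Matrix.smul_mul, mul_one, hU3]
  obtain ⟨i₀, i₁, hne⟩ := hne
  set p : Fin n → Prop := fun i => lam i = lam i₀ with hpdef
  -- the conjugated weights commute with D entrywise
  have hM0 : ∀ u ∈ Set.Ioo a b, ∀ i j : Fin n, lam i ≠ lam j →
      (star U * W u * U) i j = 0 := by
    intro u hu i j hij
    have hcomm : D * (star U * W u * U) = (star U * W u * U) * D := by
      have h1 : B * (W u * U) = W u * (B * U) := by
        rw [← mul_assoc, hBc u hu, mul_assoc]
      rw [hspec] at h1
      have h2 : star U * (U * D * star U * (W u * U)) = star U * (W u * (U * D * star U * U)) :=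
        congrArg (star U * ·) h1
      simp only [mul_assoc, hU1', hU2'] at h2
      simp only [hU4, mul_one] at h2
      simp only [mul_assoc]
      exact h2
    have := congrFun (congrFun hcomm i) j
    simp only [hDdef, Matrix.diagonal_mul, Matrix.mul_diagonal] at this
    have hlam : (RCLike.ofReal (lam i) : ℂ) ≠ (RCLike.ofReal (lam j) : ℂ) :=
      fun h => hij (RCLike.ofReal_inj.mp h)
    simp only [Function.comp_apply] at this
    have hsub : (star U * W u * U) i j * ((RCLike.ofReal (lam i) : ℂ) - (RCLike.ofReal (lam j) : ℂ)) = 0 := by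
      rw [mul_sub]
      rw [mul_comm ((star U * W u * U) i j) ((RCLike.ofReal (lam i) : ℂ))]
      rw [this]; ring
    rcases mul_eq_zero.mp hsub with h | h
    · exact h
    · exact absurd (sub_eq_zero.mp h) hlam
  set e : Fin n → ℂ := fun i => if p i then 1 else 0 with hedef
  set E : Matrix (Fin n) (Fin n) ℂ := Matrix.diagonal e with hEdef
  have hEE : E * E = E := by
    rw [hEdef, Matrix.diagonal_mul_diagonal]
    refine congrArg Matrix.diagonal (funext fun i => ?_)
    simp only [hedef]
    split_ifs <;> simp
  have hEstar : star E = E := by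
    rw [hEdef, Matrix.star_eq_conjTranspose, Matrix.diagonal_conjTranspose]
    refine congrArg Matrix.diagonal (funext fun i => ?_)
    simp only [hedef, Pi.star_apply]
    split_ifs <;> simp
  set P : Matrix (Fin n) (Fin n) ℂ := U * E * star U with hPdef
  have hPherm : P.IsHermitian := by
    unfold Matrix.IsHermitian
    rw [← Matrix.star_eq_conjTranspose, hPdef]
    simp only [StarMul.star_mul, star_star]
    rw [hEstar, mul_assoc]
  have hPP : P * P = P := by
    rw [hPdef]
    simp only [mul_assoc, hU1']
    rw [← mul_assoc E E, hEE]
  have hE1 : E i₀ i₀ = 1 := by simp [hEdef, hedef, Matrix.diagonal, hpdef]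
  have hE0 : E i₁ i₁ = 0 := by
    simp only [hEdef, Matrix.diagonal_apply_eq, hedef]
    rw [if_neg]
    exact fun h => hne h.symm
  have hEP : E = star U * P * U := by
    rw [hPdef]; simp only [mul_assoc, hU1']
    rw [hU4, mul_one]
  have hP0 : P ≠ 0 := by
    intro h
    rw [h, mul_zero, zero_mul] at hEP
    rw [hEP] at hE1
    simp at hE1
  have hP1 : P ≠ 1 := by
    intro h
    rw [h, mul_one, hU4] at hEP
    rw [hEP] at hE0
    simp at hE0
  -- commuting of P with W
  have hEM : ∀ u ∈ Set.Ioo a b, E * (star U * W u * U) = (star U * W u * U) * E := by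
    intro u hu
    ext i j
    simp only [hEdef, Matrix.diagonal_mul, Matrix.mul_diagonal]
    by_cases hij : e i = e j
    · rw [hij, mul_comm]
    · have hplam : lam i ≠ lam j := by
        intro hll
        apply hij
        simp only [hedef, hpdef]
        rw [hll]
      rw [hM0 u hu i j hplam, mul_zero, zero_mul]
  have hPW : ∀ u ∈ Set.Ioo a b, P * W u = W u * P := by
    intro u hu
    have hWu : W u = U * (star U * W u * U) * star U := by
      simp only [mul_assoc, hU2']
      rw [hU3, mul_one]
    calc P * W u = (U * E * star U) * (U * (star U * W u * U) * star U) := by rw [← hWu, hPdef]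
      _ = U * (E * (star U * W u * U)) * star U := by
          simp only [mul_assoc, hU1']
      _ = U * ((star U * W u * U) * E) * star U := by rw [hEM u hu]
      _ = (U * (star U * W u * U) * star U) * (U * E * star U) := by
          simp only [mul_assoc, hU1']
      _ = W u * P := by rw [← hWu, hPdef]
  constructor
  · refine ⟨P, hPherm, hPP, hP0, hP1, ?_⟩
    intro u hu
    have hc := hPW u hu
    have h1mP : (1 - P) * (1 - P) = 1 - P := by
      rw [mul_sub, mul_one, sub_mul, one_mul, hPP, sub_self, sub_zero]
    have hc' : (1 - P) * W u = W u * (1 - P) := by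
      rw [sub_mul, mul_sub, one_mul, mul_one, hc]
    rw [show P * W u * P = W u * P from by rw [hc, mul_assoc, hPP],
      show (1 - P) * W u * (1 - P) = W u * (1 - P) from by rw [hc', mul_assoc, h1mP],
      ← mul_add, add_sub_cancel, mul_one]
  · -- Part 2: block diagonal after permutation
    set m : ℕ := Fintype.card {i : Fin n // p i} with hmdef
    set m' : ℕ := Fintype.card {i : Fin n // ¬ p i} with hm'def
    have hmm : m + m' = n := by
      rw [hmdef, hm'def, ← Fintype.card_sum]
      rw [Fintype.card_congr (Equiv.sumCompl p)]
      simp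
    have hm0 : 0 < m := Fintype.card_pos_iff.mpr ⟨⟨i₀, rfl⟩⟩
    have hmn : m < n := by
      have := Fintype.card_subtype_lt (p := p) (x := i₁) (fun h => hne h.symm)
      simpa using this
    set e₁ : Fin m ≃ {i : Fin n // p i} := (Fintype.equivFin {i : Fin n // p i}).symm with he₁
    set e₂ : Fin m' ≃ {i : Fin n // ¬ p i} := (Fintype.equivFin {i : Fin n // ¬ p i}).symm with he₂
    set σ : Fin n ≃ Fin n :=
      (finCongr hmm.symm).trans (finSumFinEquiv.symm.trans ((e₁.sumCongr e₂).trans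
        (Equiv.sumCompl p))) with hσdef
    have hσ : ∀ j : Fin n, p (σ j) ↔ (j : ℕ) < m := by
      intro j
      by_cases hj : (j : ℕ) < m
      · have h1 : (finCongr hmm.symm) j = Fin.castAdd m' ⟨(j : ℕ), hj⟩ := by
          ext; simp
        have hthis : σ j = ((e₁ ⟨(j : ℕ), hj⟩ : {i : Fin n // p i}) : Fin n) := by
          rw [show σ j = (Equiv.sumCompl p) ((e₁.sumCongr e₂)
            (finSumFinEquiv.symm ((finCongr hmm.symm) j))) from rfl, h1,
            finSumFinEquiv_symm_apply_castAdd]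
          simp
        rw [hthis]
        simpa [hj] using (e₁ ⟨(j : ℕ), hj⟩).2
      · have hjn : (j : ℕ) - m < m' := by omega
        have h1 : (finCongr hmm.symm) j = Fin.natAdd m ⟨(j : ℕ) - m, hjn⟩ := by
          ext; simp; omega
        have hthis : σ j = ((e₂ ⟨(j : ℕ) - m, hjn⟩ : {i : Fin n // ¬ p i}) : Fin n) := by
          rw [show σ j = (Equiv.sumCompl p) ((e₁.sumCongr e₂)
            (finSumFinEquiv.symm ((finCongr hmm.symm) j))) from rfl, h1,
            finSumFinEquiv_symm_apply_natAdd]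
          simp
        rw [hthis]
        simpa [hj] using (e₂ ⟨(j : ℕ) - m, hjn⟩).2
    refine ⟨U.submatrix id ⇑σ, m, hm0, hmn, ?_, ?_⟩
    · rw [← Matrix.star_eq_conjTranspose, Matrix.star_eq_conjTranspose,
        Matrix.conjTranspose_submatrix, ← Matrix.star_eq_conjTranspose,
        Matrix.submatrix_mul_equiv, hU3, Matrix.submatrix_id_id]
    · intro u hu i j hij
      have hsub : (U.submatrix id ⇑σ).conjTranspose * W u * U.submatrix id ⇑σ
          = (star U * W u * U).submatrix ⇑σ ⇑σ := by
        rw [Matrix.conjTranspose_submatrix, ← Matrix.star_eq_conjTranspose]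
        rw [show W u = (W u).submatrix (⇑(Equiv.refl (Fin n))) id from by simp]
        rw [show (star U).submatrix ⇑σ id = (star U).submatrix ⇑σ ⇑(Equiv.refl (Fin n)) from rfl]
        rw [Matrix.submatrix_mul_equiv]
        rw [show (star U * W u).submatrix ⇑σ id * U.submatrix id ⇑σ
            = (star U * W u).submatrix ⇑σ ⇑(Equiv.refl (Fin n))
              * U.submatrix (⇑(Equiv.refl (Fin n))) ⇑σ from rfl]
        rw [Matrix.submatrix_mul_equiv]
        simp
      rw [hsub]
      have hlamne : lam (σ i) ≠ lam (σ j) := by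
        rcases hij with ⟨hi, hj⟩ | ⟨hi, hj⟩
        · have h1 : lam (σ i) = lam i₀ := (hσ i).mpr hi
          have h2 : ¬ p (σ j) := fun h => hj ((hσ j).mp h)
          intro h; exact h2 (show lam (σ j) = lam i₀ from h.symm.trans h1)
        · have h1 : ¬ p (σ i) := fun h => hi ((hσ i).mp h)
          have h2 : lam (σ j) = lam i₀ := (hσ j).mpr hj
          intro h; exact h1 (show lam (σ i) = lam i₀ from h.trans h2)
      exact hM0 u hu (σ i) (σ j) hlamne

/-- If an `n × n` matrix weight `W` on `(a,b)` (positive semidefinite Hermitian at each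
point) admits a non-scalar matrix `A` in its commutant, then there is a Hermitian
projection `P ≠ 0, 1` with `W = P W P + (1-P) W (1-P)` on `(a,b)`; consequently, after
conjugating by a unitary `R`, the weight is block diagonal, i.e. it reduces to a direct
sum of weights of smaller sizes. -/
theorem weight_reduces_of_nontrivial_commutant (n : ℕ) (a b : ℝ)
    (W : ℝ → Matrix (Fin n) (Fin n) ℂ)
    (hW : ∀ u ∈ Set.Ioo a b, (W u).PosSemidef)
    (A : Matrix (Fin n) (Fin n) ℂ)
    (hA : ∀ u ∈ Set.Ioo a b, A * W u = W u * A)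
    (hAs : ∀ c : ℂ, A ≠ c • (1 : Matrix (Fin n) (Fin n) ℂ)) :
    (∃ P : Matrix (Fin n) (Fin n) ℂ, P.IsHermitian ∧ P * P = P ∧ P ≠ 0 ∧ P ≠ 1 ∧
      ∀ u ∈ Set.Ioo a b, W u = P * W u * P + (1 - P) * W u * (1 - P)) ∧
    (∃ R : Matrix (Fin n) (Fin n) ℂ, ∃ m : ℕ, 0 < m ∧ m < n ∧
      R * R.conjTranspose = 1 ∧
      ∀ u ∈ Set.Ioo a b, ∀ i j : Fin n,
        (((i : ℕ) < m ∧ ¬ (j : ℕ) < m) ∨ (¬ (i : ℕ) < m ∧ (j : ℕ) < m)) →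
          (R.conjTranspose * W u * R) i j = 0) := by
  have hWH : ∀ u ∈ Set.Ioo a b, (W u).conjTranspose = W u := fun u hu => (hW u hu).1
  have hAc' : ∀ u ∈ Set.Ioo a b, A.conjTranspose * W u = W u * A.conjTranspose := by
    intro u hu
    have h := congrArg Matrix.conjTranspose (hA u hu)
    rw [Matrix.conjTranspose_mul, Matrix.conjTranspose_mul, hWH u hu] at h
    exact h.symm
  by_cases hs : ∃ c : ℂ, A + A.conjTranspose = c • (1 : Matrix (Fin n) (Fin n) ℂ)
  · obtain ⟨c, hc⟩ := hs
    set B : Matrix (Fin n) (Fin n) ℂ := Complex.I • (A - A.conjTranspose) with hBdef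
    have hB : B.IsHermitian := by
      unfold Matrix.IsHermitian
      rw [hBdef, Matrix.conjTranspose_smul, Matrix.conjTranspose_sub,
        Matrix.conjTranspose_conjTranspose, Complex.star_def, Complex.conj_I, neg_smul,
        ← smul_neg, neg_sub]
    have hBc : ∀ u ∈ Set.Ioo a b, B * W u = W u * B := by
      intro u hu
      rw [hBdef, Matrix.smul_mul, Matrix.mul_smul, sub_mul, mul_sub, hA u hu, hAc' u hu]
    have hBs : ∀ d : ℂ, B ≠ d • (1 : Matrix (Fin n) (Fin n) ℂ) := by
      intro d hd
      have he : A - A.conjTranspose = (-Complex.I * d) • (1 : Matrix (Fin n) (Fin n) ℂ) := by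
        have h1 := congrArg (fun X : Matrix (Fin n) (Fin n) ℂ => (-Complex.I) • X) hd
        simp only [hBdef, smul_smul] at h1
        rw [show (-Complex.I) * Complex.I = 1 by
          rw [neg_mul, Complex.I_mul_I, neg_neg], one_smul] at h1
        exact h1
      apply hAs ((c + -Complex.I * d) / 2)
      have h2 : (2 : ℂ) • A = (c + -Complex.I * d) • (1 : Matrix (Fin n) (Fin n) ℂ) := by
        have h3 : (A + A.conjTranspose) + (A - A.conjTranspose) = (2 : ℂ) • A := by
          rw [two_smul]; abel
        rw [← h3, hc, he, ← add_smul]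
      calc A = (2 : ℂ)⁻¹ • ((2 : ℂ) • A) := by rw [smul_smul]; norm_num
        _ = ((c + -Complex.I * d) / 2) • (1 : Matrix (Fin n) (Fin n) ℂ) := by
            rw [h2, smul_smul]
            congr 1
            ring
    exact weight_key n a b W B hB hBc hBs
  · push_neg at hs
    set B : Matrix (Fin n) (Fin n) ℂ := A + A.conjTranspose with hBdef
    have hB : B.IsHermitian := by
      unfold Matrix.IsHermitian
      rw [hBdef, Matrix.conjTranspose_add, Matrix.conjTranspose_conjTranspose, add_comm]
    have hBc : ∀ u ∈ Set.Ioo a b, B * W u = W u * B := by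
      intro u hu
      rw [hBdef, add_mul, mul_add, hA u hu, hAc' u hu]
    exact weight_key n a b W B hB hBc hs
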